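/- arXiv:1706.03977 — 13 statements merged into one kernel-verified Lean document; each statement's English description precedes it below -/
import Mathlib

section
/- Let n ≥ 1, let σ : Fin n → Fin n, and let r be an equivalence relation on Fin n. The polydiagonal Δ_r = {x ∈ ℝ^n : ∀ i j, r i j → x i = x j} is invariant under the linear map L_σ : ℝ^n → ℝ^n given by (L_σ x) i = x (σ i) if and only if r is balanced for σ, i.e. for all i, j, r i j implies r (σ i) (σ j). -/
/-- For a 1-input regular network with input map `σ`, the polydiagonal
`Δ_r = {x : ℝ^n | ∀ i j, r i j → x i = x j}` is invariant under the adjacency action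
`(L_σ x) i = x (σ i)` iff `r` is balanced for `σ`. -/
theorem polydiagonal_invariant_iff_balanced
    (n : ℕ) (hn : 1 ≤ n) (σ : Fin n → Fin n)
    (r : Fin n → Fin n → Prop) (hr : Equivalence r) :
    (∀ x : Fin n → ℝ, (∀ i j, r i j → x i = x j) →
      (∀ i j, r i j → (fun k => x (σ k)) i = (fun k => x (σ k)) j)) ↔
    (∀ i j, r i j → r (σ i) (σ j)) := by
  constructor
  · intro h i j hij
    classical
    set x : Fin n → ℝ := fun k => if r k (σ i) then 1 else 0 with hx
    have hpoly : ∀ a b, r a b → x a = x b := by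
      intro a b hab
      simp only [hx]
      by_cases hA : r a (σ i)
      · rw [if_pos hA, if_pos (hr.trans (hr.symm hab) hA)]
      · rw [if_neg hA, if_neg (fun hB => hA (hr.trans hab hB))]
    have := h x hpoly i j hij
    simp only [hx, if_pos (hr.refl (σ i))] at this
    by_contra hc
    rw [if_neg (fun hB => hc (hr.symm hB))] at this
    norm_num at this
  · intro h x hx i j hij
    exact hx _ _ (h i j hij)
end

section
/- Let A be an n × n real matrix and let r be an equivalence relation on Fin n. The polydiagonal Δ_r = {x ∈ ℝ^n : ∀ i j, r i j → x i = x j} is invariant under the linear map x ↦ A.mulVec x if and only if for every pair i, j with r i j and every equivalence class K of r, the row sums over K agree: ∑_{k ∈ K} A i k = ∑_{k ∈ K} A j k. -/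
open Finset in
/-- The polydiagonal `Δ_r` is invariant under `x ↦ A.mulVec x` iff for all
related `i, j` and every `r`-equivalence class `K` (the class of an arbitrary `k₀`),
the row sums of `A` over `K` at rows `i` and `j` agree. -/
theorem polydiagonal_invariant_iff_rowsums
    (n : ℕ) (A : Matrix (Fin n) (Fin n) ℝ)
    (r : Fin n → Fin n → Prop) [DecidableRel r] (hr : Equivalence r) :
    (∀ x : Fin n → ℝ, (∀ i j, r i j → x i = x j) →
      (∀ i j, r i j → A.mulVec x i = A.mulVec x j)) ↔
    (∀ i j, r i j → ∀ k₀ : Fin n,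
      ∑ k ∈ Finset.univ.filter (fun k => r k₀ k), A i k =
      ∑ k ∈ Finset.univ.filter (fun k => r k₀ k), A j k) := by
  constructor
  · intro hinv i j hij k₀
    set x : Fin n → ℝ := fun k => if r k₀ k then 1 else 0 with hx
    have hxc : ∀ a b, r a b → x a = x b := by
      intro a b hab
      simp only [hx]
      by_cases h : r k₀ a
      · rw [if_pos h, if_pos (hr.trans h hab)]
      · rw [if_neg h, if_neg (fun h' => h (hr.trans h' (hr.symm hab)))]
    have key : ∀ i' : Fin n, A.mulVec x i' =
        ∑ k ∈ Finset.univ.filter (fun k => r k₀ k), A i' k := by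
      intro i'
      simp only [Matrix.mulVec, dotProduct, hx, mul_ite, mul_one, mul_zero]
      rw [Finset.sum_ite, Finset.sum_const_zero, add_zero]
    rw [← key i, ← key j]
    exact hinv x hxc i j hij
  · intro hsum x hxc i j hij
    letI s : Setoid (Fin n) := ⟨r, hr⟩
    have main : ∀ i' : Fin n, A.mulVec x i' =
        ∑ q : Quotient s, x q.out * ∑ k ∈ Finset.univ.filter (fun k => r q.out k), A i' k := by
      intro i'
      simp only [Matrix.mulVec, dotProduct]
      rw [← Finset.sum_fiberwise (univ : Finset (Fin n)) (fun k => (⟦k⟧ : Quotient s))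
        (fun k => A i' k * x k)]
      refine Finset.sum_congr rfl fun q _ => ?_
      rw [Finset.mul_sum]
      refine Finset.sum_congr ?_ fun k hk => ?_
      · ext k
        simp only [mem_filter, mem_univ, true_and]
        constructor
        · intro h; subst h; exact Quotient.exact (Quotient.out_eq (⟦k⟧ : Quotient s))
        · intro h; rw [← q.out_eq]; exact Quotient.sound (hr.symm h)
      · simp only [mem_filter] at hk
        rw [hxc _ _ (hr.symm hk.2), mul_comm]
    rw [main i, main j]
    refine Finset.sum_congr rfl fun q _ => ?_
    rw [hsum i j hij q.out]
end

section
/- Let A be an n × n real matrix and let r₁, r₂ be equivalence relations on Fin n such that the polydiagonals Δ_{r₁} and Δ_{r₂} in ℝ^n are invariant under x ↦ A.mulVec x. Then the intersection Δ_{r₁} ∩ Δ_{r₂} equals the polydiagonal Δ_s, where s is the equivalence relation generated by the union of r₁ and r₂ (the join of r₁ and r₂ in the lattice of equivalence relations on Fin n), and Δ_s is again invariant under x ↦ A.mulVec x; that is, the intersection of two synchrony subspaces is a synchrony subspace. -/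
/-- If the polydiagonals `Δ_{r₁}` and `Δ_{r₂}` are invariant under
`x ↦ A.mulVec x`, then `Δ_{r₁} ∩ Δ_{r₂} = Δ_s`, where `s` is the equivalence relation
generated by `r₁ ∪ r₂`, and `Δ_s` is again invariant under `x ↦ A.mulVec x`. -/
theorem inter_of_synchrony_subspaces_is_synchrony
    (n : ℕ) (A : Matrix (Fin n) (Fin n) ℝ)
    (r₁ r₂ : Fin n → Fin n → Prop)
    (hr₁ : Equivalence r₁) (hr₂ : Equivalence r₂)
    (hinv₁ : ∀ x : Fin n → ℝ, (∀ i j, r₁ i j → x i = x j) →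
      (∀ i j, r₁ i j → A.mulVec x i = A.mulVec x j))
    (hinv₂ : ∀ x : Fin n → ℝ, (∀ i j, r₂ i j → x i = x j) →
      (∀ i j, r₂ i j → A.mulVec x i = A.mulVec x j)) :
    ({ x : Fin n → ℝ | ∀ i j, r₁ i j → x i = x j } ∩
        { x : Fin n → ℝ | ∀ i j, r₂ i j → x i = x j } =
      { x : Fin n → ℝ | ∀ i j,
        Relation.EqvGen (fun i j => r₁ i j ∨ r₂ i j) i j → x i = x j }) ∧
    (∀ x : Fin n → ℝ,
      (∀ i j, Relation.EqvGen (fun i j => r₁ i j ∨ r₂ i j) i j → x i = x j) →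
      (∀ i j, Relation.EqvGen (fun i j => r₁ i j ∨ r₂ i j) i j →
        A.mulVec x i = A.mulVec x j)) := by
  have key : ∀ (y : Fin n → ℝ), (∀ i j, r₁ i j → y i = y j) →
      (∀ i j, r₂ i j → y i = y j) →
      ∀ i j, Relation.EqvGen (fun i j => r₁ i j ∨ r₂ i j) i j → y i = y j := by
    intro y h1 h2 i j h
    induction h with
    | rel a b hab => exact hab.elim (h1 a b) (h2 a b)
    | refl => rfl
    | symm a b _ ih => exact ih.symm
    | trans a b c _ _ ih1 ih2 => exact ih1.trans ih2
  constructor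
  · ext x
    constructor
    · rintro ⟨h1, h2⟩
      exact key x h1 h2
    · intro h
      exact ⟨fun i j hij => h i j (Relation.EqvGen.rel i j (Or.inl hij)),
             fun i j hij => h i j (Relation.EqvGen.rel i j (Or.inr hij))⟩
  · intro x hx
    have h1 : ∀ i j, r₁ i j → x i = x j :=
      fun i j hij => hx i j (Relation.EqvGen.rel i j (Or.inl hij))
    have h2 : ∀ i j, r₂ i j → x i = x j :=
      fun i j hij => hx i j (Relation.EqvGen.rel i j (Or.inr hij))
    exact key (A.mulVec x) (hinv₁ x h1) (hinv₂ x h2)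
end

section
/- Let A₁ be an n₁ × n₁ real matrix all of whose row sums equal v₁, let A₂ be an n₂ × n₂ real matrix all of whose row sums equal v₂, and let A be the block-diagonal matrix on the index type (Fin n₁) ⊕ (Fin n₂) with diagonal blocks A₁ and A₂ and zero off-diagonal blocks. If v₁ ≠ v₂, then every equivalence relation r on (Fin n₁) ⊕ (Fin n₂) whose polydiagonal Δ_r ⊆ ℝ^{(Fin n₁) ⊕ (Fin n₂)} is invariant under x ↦ A.mulVec x is non-bipartite: there are no c, d with r (inl c) (inr d). -/
/-- For the disjoint union of two regular networks with adjacency matrices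
`A₁` (all row sums `v₁`) and `A₂` (all row sums `v₂`), with block-diagonal adjacency
matrix `A`, if `v₁ ≠ v₂` then every synchrony subspace is non-bipartite: no equivalence
relation `r` whose polydiagonal is `A`-invariant relates a cell of `N₁` with a cell
of `N₂`. -/
theorem synchrony_nonbipartite_of_ne_valency
    (n₁ n₂ : ℕ) (A₁ : Matrix (Fin n₁) (Fin n₁) ℝ) (A₂ : Matrix (Fin n₂) (Fin n₂) ℝ)
    (v₁ v₂ : ℝ)
    (h₁ : ∀ i, ∑ j, A₁ i j = v₁) (h₂ : ∀ i, ∑ j, A₂ i j = v₂) (hv : v₁ ≠ v₂)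
    (r : (Fin n₁ ⊕ Fin n₂) → (Fin n₁ ⊕ Fin n₂) → Prop) (hr : Equivalence r)
    (hinv : ∀ x : (Fin n₁ ⊕ Fin n₂) → ℝ, (∀ i j, r i j → x i = x j) →
      (∀ i j, r i j →
        (Matrix.fromBlocks A₁ 0 0 A₂).mulVec x i = (Matrix.fromBlocks A₁ 0 0 A₂).mulVec x j)) :
    ∀ (c : Fin n₁) (d : Fin n₂), ¬ r (Sum.inl c) (Sum.inr d) := by
  intro c d hcd
  have h := hinv (fun _ => 1) (fun _ _ _ => rfl) _ _ hcd
  apply hv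
  have e1 : (Matrix.fromBlocks A₁ 0 0 A₂).mulVec (fun _ => 1) (Sum.inl c) = v₁ := by
    simp [Matrix.mulVec, dotProduct, Fintype.sum_sum_type, Matrix.fromBlocks, h₁ c]
  have e2 : (Matrix.fromBlocks A₁ 0 0 A₂).mulVec (fun _ => 1) (Sum.inr d) = v₂ := by
    simp [Matrix.mulVec, dotProduct, Fintype.sum_sum_type, Matrix.fromBlocks, h₂ d]
  rw [← e1, ← e2, h]
end

section
/- Let A₁ be an n₁ × n₁ real matrix, A₂ an n₂ × n₂ real matrix, and A the block-diagonal matrix on (Fin n₁) ⊕ (Fin n₂) with diagonal blocks A₁, A₂ and zero off-diagonal blocks. Let r be an equivalence relation on (Fin n₁) ⊕ (Fin n₂) that never relates inl c with inr d, and let r₁, r₂ denote the restrictions of r to Fin n₁ and Fin n₂ (r₁ c c' ↔ r (inl c) (inl c'), r₂ d d' ↔ r (inr d) (inr d')). Then the polydiagonal Δ_r ⊆ ℝ^{(Fin n₁) ⊕ (Fin n₂)} is invariant under A if and only if Δ_{r₁} ⊆ ℝ^{n₁} is invariant under A₁ and Δ_{r₂} ⊆ ℝ^{n₂} is invariant under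 A₂. -/
/-- For the disjoint union network with block-diagonal adjacency matrix `A`,
and an equivalence relation `r` that never relates a cell of `N₁` with a cell of `N₂`,
the polydiagonal `Δ_r` is `A`-invariant iff the polydiagonal of the restriction `r₁` is
`A₁`-invariant and the polydiagonal of the restriction `r₂` is `A₂`-invariant. -/
theorem nonbipartite_synchrony_iff_components
    (n₁ n₂ : ℕ) (A₁ : Matrix (Fin n₁) (Fin n₁) ℝ) (A₂ : Matrix (Fin n₂) (Fin n₂) ℝ)
    (r : (Fin n₁ ⊕ Fin n₂) → (Fin n₁ ⊕ Fin n₂) → Prop) (hr : Equivalence r)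
    (hnb : ∀ (c : Fin n₁) (d : Fin n₂), ¬ r (Sum.inl c) (Sum.inr d)) :
    (∀ x : (Fin n₁ ⊕ Fin n₂) → ℝ, (∀ i j, r i j → x i = x j) →
      (∀ i j, r i j →
        (Matrix.fromBlocks A₁ 0 0 A₂).mulVec x i = (Matrix.fromBlocks A₁ 0 0 A₂).mulVec x j)) ↔
    ((∀ x : Fin n₁ → ℝ, (∀ c c', r (Sum.inl c) (Sum.inl c') → x c = x c') →
        (∀ c c', r (Sum.inl c) (Sum.inl c') → A₁.mulVec x c = A₁.mulVec x c')) ∧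
     (∀ x : Fin n₂ → ℝ, (∀ d d', r (Sum.inr d) (Sum.inr d') → x d = x d') →
        (∀ d d', r (Sum.inr d) (Sum.inr d') → A₂.mulVec x d = A₂.mulVec x d'))) := by
  have key : ∀ (x : (Fin n₁ ⊕ Fin n₂) → ℝ),
      (Matrix.fromBlocks A₁ 0 0 A₂).mulVec x =
        Sum.elim (A₁.mulVec (x ∘ Sum.inl)) (A₂.mulVec (x ∘ Sum.inr)) := by
    intro x
    have hx : x = Sum.elim (x ∘ Sum.inl) (x ∘ Sum.inr) := by
      funext i; cases i <;> rfl
    rw [hx, Matrix.fromBlocks_mulVec]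
    simp
  constructor
  · intro h
    constructor
    · intro x hx c c' hcc
      have := h (Sum.elim x 0) (by
        rintro (i | i) (j | j) hij
        · exact hx i j hij
        · exact absurd hij (hnb i j)
        · exact absurd (hr.symm hij) (hnb j i)
        · rfl) (Sum.inl c) (Sum.inl c') hcc
      simpa [key] using this
    · intro x hx d d' hdd
      have := h (Sum.elim 0 x) (by
        rintro (i | i) (j | j) hij
        · rfl
        · exact absurd hij (hnb i j)
        · exact absurd (hr.symm hij) (hnb j i)
        · exact hx i j hij) (Sum.inr d) (Sum.inr d') hdd
      simpa [key] using this
  · rintro ⟨h₁, h₂⟩ x hx i j hij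
    rw [key]
    rcases i with c | d <;> rcases j with c' | d'
    · exact h₁ (x ∘ Sum.inl) (fun a b hab => hx _ _ hab) c c' hij
    · exact absurd hij (hnb c d')
    · exact absurd (hr.symm hij) (hnb c' d)
    · exact h₂ (x ∘ Sum.inr) (fun a b hab => hx _ _ hab) d d' hij
end

section
/- Let A₁ be an n₁ × n₁ real matrix, A₂ an n₂ × n₂ real matrix, and A the block-diagonal matrix on C = (Fin n₁) ⊕ (Fin n₂) with diagonal blocks A₁, A₂ and zero off-diagonal blocks. Let m ≥ 1, let c : Fin m → Fin n₁ and d : Fin m → Fin n₂ be injective, let S = {inl (c i) : i} ∪ {inr (d i) : i}, let τ : C → C be the involutive permutation that swaps inl (c i) with inr (d i) for each i and fixes all other cells, and let r be the equivalence relation on C whose only nontrivial relations are r (inl (c i)) (inr (d i)) for i : Fin m (each class is either such a pair or a singleton). Then the polydiagonal Δ_r ⊆ ℝ^C is invariant under x ↦ A.mulVec x if and only if τ is an interior symmetry of the union network on S, i.e. A s t = A (τ s) (τ t) for every s ∈ S and every t ∈ C. -/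
/-!
Both sides only concern the orbits of the involution `τ`: the polydiagonal `Δ_r` is the space of
`τ`-invariant vectors, which is spanned by the indicators of the orbits `{u, τ u}`. Testing
invariance on these indicators says that row `s` and row `τ s` of `A` have equal sums over every
orbit. Since `A` is block diagonal and `τ` moves every cell of `S` to the other block, each such
orbit sum has at most one nonzero term on either side, so the equality of orbit sums is exactly
`A s u = A (τ s) (τ u)`.
-/

open Function Matrix

theorem forall_rel_imp_eq_iff_comp_eq {ι α : Type*} {τ : ι → ι} {r : ι → ι → Prop}
    (hr : ∀ s t, r s t ↔ s = t ∨ τ s = t) (y : ι → α) :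
    (∀ s t, r s t → y s = y t) ↔ y ∘ τ = y := by
  constructor
  · intro h
    funext s
    exact (h s (τ s) ((hr _ _).2 (Or.inr rfl))).symm
  · intro h s t hst
    rcases (hr s t).1 hst with rfl | rfl
    exacts [rfl, (congrFun h s).symm]

theorem Matrix.fromBlocks_zero_zero_apply_of_isLeft_ne {α β R : Type*} [Zero R]
    (A₁ : Matrix α α R) (A₂ : Matrix β β R) {s t : α ⊕ β} (h : s.isLeft ≠ t.isLeft) :
    fromBlocks A₁ 0 0 A₂ s t = 0 := by
  rcases s with _ | _ <;> rcases t with _ | _ <;> simp_all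

namespace Matrix

variable {ι R : Type*} [Semiring R] {A : Matrix ι ι R} {τ : ι → ι}

theorem apply_eq_of_orbit_sum_eq [DecidableEq ι] (side : ι → Bool)
    (hA : ∀ s t, side s ≠ side t → A s t = 0) (hcross : ∀ s, τ s ≠ s → side (τ s) ≠ side s)
    {s : ι} (hs : τ s ≠ s) (u : ι)
    (h : ∑ v ∈ {u, τ u}, A s v = ∑ v ∈ {u, τ u}, A (τ s) v) :
    A s u = A (τ s) (τ u) := by
  by_cases hu : τ u = u
  · rw [hu] at h ⊢
    simpa using h
  rw [Finset.sum_pair (Ne.symm hu), Finset.sum_pair (Ne.symm hu)] at h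
  have hs' := hcross s hs
  have hu' := hcross u hu
  by_cases hsu : side s = side u
  · rwa [hA (τ s) u (hsu ▸ hs'), hA s (τ u) (hsu ▸ hu'.symm), add_zero, zero_add] at h
  · rw [hA s u hsu, hA (τ s) (τ u)]
    rwa [Bool.eq_not_iff.2 hs', Bool.eq_not_iff.2 hu', ne_eq, Bool.not_inj_iff]

variable [Fintype ι]

theorem mulVec_comp_eq_of_apply_eq (hτ : Involutive τ)
    (hA : ∀ s, τ s ≠ s → ∀ t, A s t = A (τ s) (τ t)) {x : ι → R} (hx : x ∘ τ = x) :
    (A *ᵥ x) ∘ τ = A *ᵥ x := by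
  funext s
  by_cases hs : τ s = s
  · simp [hs]
  have hxτ : ∀ t, x (τ t) = x t := congrFun hx
  calc (A *ᵥ x) (τ s) = ∑ t, A (τ s) (τ t) * x (τ t) :=
        (Equiv.sum_comp hτ.toPerm fun t => A (τ s) t * x t).symm
    _ = (A *ᵥ x) s := by simp only [← hA s hs, hxτ]; rfl

theorem orbit_sum_eq_of_mulVec_comp_eq [DecidableEq ι] (hτ : Involutive τ)
    (h : ∀ x : ι → R, x ∘ τ = x → (A *ᵥ x) ∘ τ = A *ᵥ x) (s u : ι) :
    ∑ v ∈ {u, τ u}, A s v = ∑ v ∈ {u, τ u}, A (τ s) v := by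
  set x : ι → R := fun v => if v ∈ ({u, τ u} : Finset ι) then 1 else 0
  have hx : x ∘ τ = x := by
    funext v
    simp [x, hτ.eq_iff, hτ u, or_comm]
  have hAx : ∀ w, (A *ᵥ x) w = ∑ v ∈ {u, τ u}, A w v := fun w => by
    simp only [mulVec, dotProduct, x, mul_ite, mul_one, mul_zero, Finset.sum_ite_mem,
      Finset.univ_inter]
  rw [← hAx, ← hAx]
  exact (congrFun (h x hx) s).symm

theorem mulVec_comp_eq_iff_of_block_diagonal (side : ι → Bool)
    (hA : ∀ s t, side s ≠ side t → A s t = 0) (hτ : Involutive τ)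
    (hcross : ∀ s, τ s ≠ s → side (τ s) ≠ side s) :
    (∀ x : ι → R, x ∘ τ = x → (A *ᵥ x) ∘ τ = A *ᵥ x) ↔
      ∀ s, τ s ≠ s → ∀ t, A s t = A (τ s) (τ t) := by
  classical
  exact ⟨fun h s hs t => apply_eq_of_orbit_sum_eq side hA hcross hs t
      (orbit_sum_eq_of_mulVec_comp_eq hτ h s t),
    fun h _ hx => mulVec_comp_eq_of_apply_eq hτ h hx⟩

end Matrix

section PairSwap

variable {κ α β : Type*} {c : κ → α} {d : κ → β} {S : Set (α ⊕ β)} {τ : α ⊕ β → α ⊕ β}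

theorem pairSwap_isLeft_ne
    (hS : S = Set.range (fun i => Sum.inl (c i)) ∪ Set.range (fun i => Sum.inr (d i)))
    (hswap : ∀ i, τ (Sum.inl (c i)) = Sum.inr (d i) ∧ τ (Sum.inr (d i)) = Sum.inl (c i))
    {s : α ⊕ β} (hs : s ∈ S) : (τ s).isLeft ≠ s.isLeft := by
  rw [hS] at hs
  rcases hs with ⟨i, rfl⟩ | ⟨i, rfl⟩
  · simp [(hswap i).1]
  · simp [(hswap i).2]

theorem pairSwap_mem_iff
    (hS : S = Set.range (fun i => Sum.inl (c i)) ∪ Set.range (fun i => Sum.inr (d i)))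
    (hswap : ∀ i, τ (Sum.inl (c i)) = Sum.inr (d i) ∧ τ (Sum.inr (d i)) = Sum.inl (c i))
    (hfix : ∀ s ∉ S, τ s = s) (s : α ⊕ β) : s ∈ S ↔ τ s ≠ s :=
  ⟨fun hs hτs => pairSwap_isLeft_ne hS hswap hs (congrArg Sum.isLeft hτs),
    not_imp_comm.1 (hfix s)⟩

theorem pairSwap_involutive
    (hS : S = Set.range (fun i => Sum.inl (c i)) ∪ Set.range (fun i => Sum.inr (d i)))
    (hswap : ∀ i, τ (Sum.inl (c i)) = Sum.inr (d i) ∧ τ (Sum.inr (d i)) = Sum.inl (c i))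
    (hfix : ∀ s ∉ S, τ s = s) : Function.Involutive τ := by
  intro s
  by_cases hs : s ∈ S
  · rw [hS] at hs
    rcases hs with ⟨i, rfl⟩ | ⟨i, rfl⟩
    · rw [(hswap i).1, (hswap i).2]
    · rw [(hswap i).2, (hswap i).1]
  · rw [hfix s hs, hfix s hs]

theorem pairSwap_rel_iff
    (hS : S = Set.range (fun i => Sum.inl (c i)) ∪ Set.range (fun i => Sum.inr (d i)))
    (hswap : ∀ i, τ (Sum.inl (c i)) = Sum.inr (d i) ∧ τ (Sum.inr (d i)) = Sum.inl (c i))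
    (hfix : ∀ s ∉ S, τ s = s) {r : α ⊕ β → α ⊕ β → Prop}
    (hr : ∀ s t, r s t ↔ (s = t ∨ ∃ i,
      (s = Sum.inl (c i) ∧ t = Sum.inr (d i)) ∨ (s = Sum.inr (d i) ∧ t = Sum.inl (c i))))
    (s t : α ⊕ β) : r s t ↔ s = t ∨ τ s = t := by
  rw [hr]
  constructor
  · rintro (rfl | ⟨i, ⟨rfl, rfl⟩ | ⟨rfl, rfl⟩⟩)
    exacts [Or.inl rfl, Or.inr (hswap i).1, Or.inr (hswap i).2]
  · rintro (rfl | rfl)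
    · exact Or.inl rfl
    by_cases hs : s ∈ S
    · rw [hS] at hs
      rcases hs with ⟨i, rfl⟩ | ⟨i, rfl⟩
      · exact Or.inr ⟨i, Or.inl ⟨rfl, (hswap i).1⟩⟩
      · exact Or.inr ⟨i, Or.inr ⟨rfl, (hswap i).2⟩⟩
    · exact Or.inl (hfix s hs).symm

end PairSwap

theorem pairing_bipartite_synchrony_iff_interior_symmetry_general
    (n₁ n₂ m : ℕ)
    (A₁ : Matrix (Fin n₁) (Fin n₁) ℝ) (A₂ : Matrix (Fin n₂) (Fin n₂) ℝ)
    (c : Fin m → Fin n₁) (d : Fin m → Fin n₂)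
    (S : Set (Fin n₁ ⊕ Fin n₂))
    (hS : S = Set.range (fun i => Sum.inl (c i)) ∪ Set.range (fun i => Sum.inr (d i)))
    (τ : (Fin n₁ ⊕ Fin n₂) → (Fin n₁ ⊕ Fin n₂))
    (hτswap : ∀ i, τ (Sum.inl (c i)) = Sum.inr (d i) ∧ τ (Sum.inr (d i)) = Sum.inl (c i))
    (hτfix : ∀ s ∉ S, τ s = s)
    (r : (Fin n₁ ⊕ Fin n₂) → (Fin n₁ ⊕ Fin n₂) → Prop)
    (hrdef : ∀ s t, r s t ↔ (s = t ∨ ∃ i : Fin m,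
      (s = Sum.inl (c i) ∧ t = Sum.inr (d i)) ∨ (s = Sum.inr (d i) ∧ t = Sum.inl (c i)))) :
    (∀ x : (Fin n₁ ⊕ Fin n₂) → ℝ, (∀ i j, r i j → x i = x j) →
      (∀ i j, r i j →
        (Matrix.fromBlocks A₁ 0 0 A₂).mulVec x i = (Matrix.fromBlocks A₁ 0 0 A₂).mulVec x j)) ↔
    (∀ s ∈ S, ∀ t, (Matrix.fromBlocks A₁ 0 0 A₂) s t = (Matrix.fromBlocks A₁ 0 0 A₂) (τ s) (τ t)) := by
  have hmem := pairSwap_mem_iff hS hτswap hτfix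
  have hcross : ∀ s, τ s ≠ s → (τ s).isLeft ≠ s.isLeft := fun s hs =>
    pairSwap_isLeft_ne hS hτswap ((hmem s).2 hs)
  simp only [forall_rel_imp_eq_iff_comp_eq (pairSwap_rel_iff hS hτswap hτfix hrdef), hmem]
  exact mulVec_comp_eq_iff_of_block_diagonal Sum.isLeft
    (fun _ _ => fromBlocks_zero_zero_apply_of_isLeft_ne A₁ A₂)
    (pairSwap_involutive hS hτswap hτfix) hcross

/-- For the disjoint union network with block-diagonal adjacency matrix `A`,
a pairing of cells `c i ∈ N₁` with `d i ∈ N₂` (`c`, `d` injective), with associated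
swap permutation `τ` (fixing all cells outside `S = {inl (c i)} ∪ {inr (d i)}`) and
equivalence relation `r` whose only nontrivial classes are the pairs
`{inl (c i), inr (d i)}`, the polydiagonal `Δ_r` is `A`-invariant iff `τ` is an interior
symmetry of the union network on `S`, i.e. `A s t = A (τ s) (τ t)` for all `s ∈ S` and
all cells `t`. -/
theorem pairing_bipartite_synchrony_iff_interior_symmetry
    (n₁ n₂ m : ℕ) (hm : 1 ≤ m)
    (A₁ : Matrix (Fin n₁) (Fin n₁) ℝ) (A₂ : Matrix (Fin n₂) (Fin n₂) ℝ)
    (c : Fin m → Fin n₁) (d : Fin m → Fin n₂)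
    (hc : Function.Injective c) (hd : Function.Injective d)
    (S : Set (Fin n₁ ⊕ Fin n₂))
    (hS : S = Set.range (fun i => Sum.inl (c i)) ∪ Set.range (fun i => Sum.inr (d i)))
    (τ : (Fin n₁ ⊕ Fin n₂) → (Fin n₁ ⊕ Fin n₂))
    (hτswap : ∀ i, τ (Sum.inl (c i)) = Sum.inr (d i) ∧ τ (Sum.inr (d i)) = Sum.inl (c i))
    (hτfix : ∀ s ∉ S, τ s = s)
    (r : (Fin n₁ ⊕ Fin n₂) → (Fin n₁ ⊕ Fin n₂) → Prop)
    (hrdef : ∀ s t, r s t ↔ (s = t ∨ ∃ i : Fin m,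
      (s = Sum.inl (c i) ∧ t = Sum.inr (d i)) ∨ (s = Sum.inr (d i) ∧ t = Sum.inl (c i)))) :
    (∀ x : (Fin n₁ ⊕ Fin n₂) → ℝ, (∀ i j, r i j → x i = x j) →
      (∀ i j, r i j →
        (Matrix.fromBlocks A₁ 0 0 A₂).mulVec x i = (Matrix.fromBlocks A₁ 0 0 A₂).mulVec x j)) ↔
    (∀ s ∈ S, ∀ t, (Matrix.fromBlocks A₁ 0 0 A₂) s t = (Matrix.fromBlocks A₁ 0 0 A₂) (τ s) (τ t)) :=
  pairing_bipartite_synchrony_iff_interior_symmetry_general n₁ n₂ m A₁ A₂ c d S hS τ hτswap hτfix r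
    hrdef
end

section
/- Let n ≥ 1 and σ : Fin n → Fin n, and let P = {i : ∃ k ≥ 1, σ^[k] i = i} be the set of periodic points of σ. Assume P forms a single cycle, i.e. for all p, q ∈ P there exists t with σ^[t] p = q, and let m = card P. Then the characteristic polynomial of the adjacency matrix A of σ over ℂ (the n × n matrix with A i j = 1 if σ i = j and 0 otherwise) equals X^{n−m} · (X^m − 1). In particular the eigenvalues of A are the m-th roots of unity, each with algebraic multiplicity one, together with 0 with algebraic multiplicity n − m. -/
open Polynomial Matrix

theorem cycle_charpoly (m' : ℕ)
    (C : Matrix (Fin (m' + 1)) (Fin (m' + 1)) ℂ)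
    (hC : ∀ k l, C k l = if l = k + 1 then 1 else 0) :
    C.charpoly = X ^ (m' + 1) - 1 := by
  have hD : ∀ i j, charmatrix C i j
      = (if i = j then (X : ℂ[X]) else 0) - if j = i + 1 then 1 else 0 := by
    intro i j
    by_cases h : i = j
    · subst h; rw [charmatrix_apply_eq, hC]; simp [apply_ite Polynomial.C]
    · rw [charmatrix_apply_ne _ _ _ h, hC]
      simp [apply_ite Polynomial.C, h]
  rcases Nat.eq_zero_or_pos m' with rfl | hm'
  · rw [Matrix.charpoly, det_fin_one, hD, pow_one]
    norm_num
  have h1v : ((1 : Fin (m' + 1))).val = 1 := by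
    rw [Fin.val_one']
    exact Nat.mod_eq_of_lt (by omega)
  have hadd : ∀ i : Fin (m' + 1), ((i + 1 : Fin (m' + 1))).val = (i.val + 1) % (m' + 1) := by
    intro i
    rw [Fin.val_add, h1v]
  have hmod : ∀ a : ℕ, a < m' + 1 → (a + 1) % (m' + 1) = if a = m' then 0 else a + 1 := by
    intro a ha
    by_cases h : a = m'
    · subst h; simp [Nat.mod_self]
    · rw [Nat.mod_eq_of_lt (by omega), if_neg h]
  rw [Matrix.charpoly, det_succ_column_zero]
  have h0last : (0 : Fin (m' + 1)) ≠ Fin.last m' := by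
    simp [Fin.ext_iff, Fin.last, hm'.ne]
  have hcol : ∀ i : Fin (m' + 1), i ≠ 0 → i ≠ Fin.last m' → charmatrix C i 0 = 0 := by
    intro i h1 h2
    have h2' : i.val ≠ m' := fun hh => h2 (Fin.ext (by rw [Fin.val_last]; exact hh))
    have hA : ¬ (0 : Fin (m' + 1)) = i + 1 := by
      intro h
      have hv := congrArg Fin.val h
      rw [hadd, hmod i.val i.isLt, Fin.val_zero] at hv
      split_ifs at hv <;> omega
    rw [hD, if_neg h1, if_neg hA, sub_zero]
  set f : Fin (m' + 1) → ℂ[X] := fun i =>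
    (-1) ^ (i : ℕ) * charmatrix C i 0 * ((charmatrix C).submatrix i.succAbove Fin.succ).det
    with hf
  have hsum : ∑ i, f i = f 0 + f (Fin.last m') := by
    rw [← Finset.sum_pair h0last]
    refine (Finset.sum_subset (Finset.subset_univ _) ?_).symm
    intro i _ hi
    simp only [Finset.mem_insert, Finset.mem_singleton] at hi
    push_neg at hi
    simp [hf, hcol i hi.1 hi.2]
  rw [hsum]
  -- minor at 0
  have hminor0 : ((charmatrix C).submatrix (Fin.succAbove 0) Fin.succ).det = X ^ m' := by
    have htri : ((charmatrix C).submatrix (Fin.succAbove 0) Fin.succ).BlockTriangular id := by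
      intro j k hlt
      have hlt' : (k : ℕ) < (j : ℕ) := hlt
      simp only [submatrix_apply, Fin.succAbove_zero, id]
      have hA : ¬ (Fin.succ j = Fin.succ k) := by
        intro h
        have := congrArg Fin.val (Fin.succ_injective _ h)
        omega
      have hB : ¬ (Fin.succ k = Fin.succ j + 1) := by
        intro h
        have hv := congrArg Fin.val h
        rw [hadd, Fin.val_succ, Fin.val_succ, hmod (j.val + 1) (by have := j.isLt; omega)] at hv
        have := k.isLt
        split_ifs at hv <;> omega
      rw [hD, if_neg hA, if_neg hB, sub_zero]
    rw [Matrix.det_of_upperTriangular htri]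
    have hdiag : ∀ j ∈ Finset.univ, ((charmatrix C).submatrix (Fin.succAbove 0) Fin.succ) j j
        = (X : ℂ[X]) := by
      intro j _
      simp only [submatrix_apply, Fin.succAbove_zero]
      have hB : ¬ (Fin.succ j = Fin.succ j + 1) := by
        intro h
        have hv := congrArg Fin.val h
        rw [hadd, Fin.val_succ, hmod (j.val + 1) (by have := j.isLt; omega)] at hv
        have := j.isLt
        split_ifs at hv <;> omega
      rw [hD, if_pos rfl, if_neg hB, sub_zero]
    rw [Finset.prod_congr rfl hdiag, Finset.prod_const, Finset.card_univ, Fintype.card_fin]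
  -- minor at last
  have hminorlast :
      ((charmatrix C).submatrix (Fin.last m').succAbove Fin.succ).det = (-1) ^ m' := by
    have htri : ((charmatrix C).submatrix (Fin.last m').succAbove Fin.succ).BlockTriangular
        OrderDual.toDual := by
      intro j k hlt
      have hlt' : (j : ℕ) < (k : ℕ) := hlt
      simp only [submatrix_apply, Fin.succAbove_last]
      have hA : ¬ (Fin.castSucc j = Fin.succ k) := by
        intro h
        have hv := congrArg Fin.val h
        rw [Fin.coe_castSucc, Fin.val_succ] at hv
        omega
      have hB : ¬ (Fin.succ k = Fin.castSucc j + 1) := by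
        intro h
        have hv := congrArg Fin.val h
        rw [hadd, Fin.val_succ, Fin.coe_castSucc, hmod j.val (by omega)] at hv
        have := j.isLt
        split_ifs at hv <;> omega
      rw [hD, if_neg hA, if_neg hB, sub_zero]
    rw [Matrix.det_of_lowerTriangular _ htri]
    have hdiag : ∀ j ∈ Finset.univ, ((charmatrix C).submatrix (Fin.last m').succAbove Fin.succ) j j
        = (-1 : ℂ[X]) := by
      intro j _
      simp only [submatrix_apply, Fin.succAbove_last]
      have hA : ¬ (Fin.castSucc j = Fin.succ j) := by
        intro h
        have hv := congrArg Fin.val h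
        rw [Fin.coe_castSucc, Fin.val_succ] at hv
        omega
      have hB : Fin.succ j = Fin.castSucc j + 1 := by
        apply Fin.ext
        rw [Fin.val_succ, hadd, Fin.coe_castSucc,
          Nat.mod_eq_of_lt (by have := j.isLt; omega)]
      rw [hD, if_neg hA, if_pos hB, zero_sub]
    rw [Finset.prod_congr rfl hdiag, Finset.prod_const, Finset.card_univ, Fintype.card_fin]
  have hf0 : f 0 = X ^ (m' + 1) := by
    rw [hf]
    simp only [Fin.val_zero, pow_zero, one_mul]
    have hB : ¬ ((0 : Fin (m' + 1)) = 0 + 1) := by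
      intro h
      have hv := congrArg Fin.val h
      rw [hadd, Fin.val_zero, hmod 0 (by omega)] at hv
      split_ifs at hv <;> omega
    rw [hD, if_pos rfl, if_neg hB, sub_zero, hminor0]
    ring
  have hflast : f (Fin.last m') = -1 := by
    rw [hf]
    simp only [Fin.val_last]
    have hB : (0 : Fin (m' + 1)) = Fin.last m' + 1 := by
      apply Fin.ext
      rw [Fin.val_zero, hadd, Fin.val_last, Nat.mod_self]
    rw [hD, if_neg h0last.symm, if_pos hB, zero_sub, hminorlast]
    have h2 : ((-1 : ℂ[X])) ^ m' * (-1) ^ m' = 1 := by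
      rw [← pow_add]
      exact Even.neg_one_pow ⟨m', rfl⟩
    linear_combination (-1 : ℂ[X]) * h2
  rw [hf0, hflast]
  ring

/-- For a 1-input regular network with input map `σ` whose set `P` of
periodic points forms a single cycle of length `m`, the characteristic polynomial of
the adjacency matrix (over `ℂ`) is `X^(n-m) * (X^m - 1)`. -/
theorem charpoly_of_one_input_network
    (n : ℕ) (hn : 1 ≤ n) (σ : Fin n → Fin n)
    (P : Set (Fin n)) (hP : P = { i | ∃ k ≥ 1, σ^[k] i = i })
    (hcycle : ∀ p ∈ P, ∀ q ∈ P, ∃ t : ℕ, σ^[t] p = q)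
    (m : ℕ) (hm : m = P.ncard)
    (A : Matrix (Fin n) (Fin n) ℂ)
    (hA : ∀ i j, A i j = if σ i = j then 1 else 0) :
    A.charpoly = Polynomial.X ^ (n - m) * (Polynomial.X ^ m - 1) := by
  classical
  have hPP : P = Function.periodicPts σ := by
    rw [hP]; ext i
    simp only [Set.mem_setOf_eq, Function.mem_periodicPts]
    constructor
    · rintro ⟨k, hk, h⟩; exact ⟨k, hk, h⟩
    · rintro ⟨k, hk, h⟩; exact ⟨k, hk, h⟩
  have hmem_iter : ∀ (i : Fin n) (t : ℕ), i ∈ P → σ^[t] i ∈ P := by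
    intro i t hi
    rw [hPP] at hi ⊢
    exact ((Function.bijOn_periodicPts σ).mapsTo.iterate t) hi
  have pigeon : ∀ i : Fin n, ∃ a b : ℕ, a < b ∧ b ≤ n ∧ σ^[a] i = σ^[b] i := by
    intro i
    obtain ⟨a, b, hne, he⟩ := Fintype.exists_ne_map_eq_of_card_lt
      (fun t : Fin (n + 1) => σ^[t.val] i) (by simp)
    have hne' : a.val ≠ b.val := fun hh => hne (Fin.ext hh)
    have ha := a.isLt; have hb := b.isLt
    rcases Nat.lt_or_ge a.val b.val with h | h
    · exact ⟨a.val, b.val, h, by omega, he⟩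
    · exact ⟨b.val, a.val, by omega, by omega, he.symm⟩
  have hn_iter : ∀ i : Fin n, σ^[n] i ∈ P := by
    intro i
    obtain ⟨a, b, hab, hbn, he⟩ := pigeon i
    have hmem : σ^[a] i ∈ P := by
      rw [hP]
      refine ⟨b - a, by omega, ?_⟩
      rw [← Function.iterate_add_apply, Nat.sub_add_cancel hab.le, ← he]
    have h2 : σ^[n] i = σ^[n - a] (σ^[a] i) := by
      rw [← Function.iterate_add_apply, Nat.sub_add_cancel (by omega : a ≤ n)]
    rw [h2]
    exact hmem_iter _ _ hmem
  -- base point on the cycle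
  set p₀ : Fin n := σ^[n] ⟨0, hn⟩ with hp₀def
  have hp₀ : p₀ ∈ P := hn_iter _
  have hrpos : 0 < Function.minimalPeriod σ p₀ :=
    Function.minimalPeriod_pos_of_mem_periodicPts (hPP ▸ hp₀)
  have hiter_mod : ∀ t, σ^[t % Function.minimalPeriod σ p₀] p₀ = σ^[t] p₀ := fun t =>
    Function.iterate_mod_minimalPeriod_eq
  have hinj : Set.InjOn (fun t => σ^[t] p₀) (Set.Iio (Function.minimalPeriod σ p₀)) :=
    Function.iterate_injOn_Iio_minimalPeriod
  have hPeq : P = (fun t => σ^[t] p₀) '' Set.Iio (Function.minimalPeriod σ p₀) := by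
    apply Set.Subset.antisymm
    · intro q hq
      obtain ⟨t, ht⟩ := hcycle p₀ hp₀ q hq
      refine ⟨t % Function.minimalPeriod σ p₀, Nat.mod_lt _ hrpos, ?_⟩
      show σ^[t % Function.minimalPeriod σ p₀] p₀ = q
      rw [hiter_mod]; exact ht
    · rintro q ⟨t, -, rfl⟩
      exact hmem_iter _ _ hp₀
  have hmr : m = Function.minimalPeriod σ p₀ := by
    rw [hm, hPeq, Set.ncard_image_of_injOn hinj, ← Finset.coe_range,
      Set.ncard_coe_finset, Finset.card_range]
  have hper : σ^[m] p₀ = p₀ := by rw [hmr]; exact Function.iterate_minimalPeriod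
  have hmpos : 0 < m := hmr ▸ hrpos
  obtain ⟨m', rfl⟩ : ∃ m', m = m' + 1 := ⟨m - 1, by omega⟩
  -- the cycle parametrization
  set g : Fin (m' + 1) → Fin n := fun k => σ^[k.val] p₀ with hg
  have hg_mem : ∀ k, g k ∈ P := fun k => hmem_iter _ _ hp₀
  have hg_inj : Function.Injective g := by
    intro k l h
    exact Fin.ext (hinj (hmr ▸ k.isLt) (hmr ▸ l.isLt) h)
  have hg_surj : ∀ q ∈ P, ∃ k : Fin (m' + 1), g k = q := by
    intro q hq
    rw [hPeq] at hq
    obtain ⟨t, ht, rfl⟩ := hq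
    exact ⟨⟨t, hmr ▸ ht⟩, rfl⟩
  let eP : Fin (m' + 1) ≃ {i // i ∈ P} :=
    Equiv.ofBijective (fun k => (⟨g k, hg_mem k⟩ : {i // i ∈ P}))
      ⟨fun k l h => hg_inj (congrArg Subtype.val h),
       fun q => by obtain ⟨k, hk⟩ := hg_surj q.val q.prop; exact ⟨k, Subtype.ext hk⟩⟩
  have hvadd : ∀ k : Fin (m' + 1), ((k + 1 : Fin (m' + 1))).val = (k.val + 1) % (m' + 1) := by
    intro k
    rw [Fin.val_add, Fin.val_one']
    exact Nat.ModEq.add_left _ (Nat.mod_modEq 1 (m' + 1))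
  have hkey : ∀ k l : Fin (m' + 1), σ (g k) = g l ↔ l = k + 1 := by
    intro k l
    have h1 : σ (g k) = σ^[(k.val + 1) % (m' + 1)] p₀ := by
      have h2 := hiter_mod (k.val + 1)
      rw [← hmr] at h2
      rw [hg]
      simp only
      rw [← Function.iterate_succ_apply' σ k.val p₀]
      exact h2.symm
    rw [h1]
    constructor
    · intro h
      have h2 := hinj (Set.mem_Iio.mpr (hmr ▸ Nat.mod_lt _ hmpos)) (Set.mem_Iio.mpr (hmr ▸ l.isLt)) h
      exact Fin.ext (by rw [hvadd]; exact h2.symm)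
    · rintro rfl
      rw [hg]
      simp only
      rw [hvadd k]
  -- block decomposition
  let Qt := {i // i ∉ P}
  let e : (Fin (m' + 1) ⊕ Qt) ≃ Fin n :=
    (Equiv.sumCongr eP (Equiv.refl Qt)).trans (Equiv.sumCompl (· ∈ P))
  have he_inl : ∀ k : Fin (m' + 1), e (Sum.inl k) = g k := fun k => rfl
  have he_inr : ∀ q : Qt, e (Sum.inr q) = q.val := fun q => rfl
  set M := A.submatrix e e with hMdef
  have hcp : A.charpoly = M.charpoly := by
    have h := Matrix.charpoly_reindex e.symm A
    rw [Matrix.reindex_apply, Equiv.symm_symm] at h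
    exact h.symm
  have h11 : M.toBlocks₁₁ = Matrix.of (fun k l : Fin (m' + 1) => if l = k + 1 then (1 : ℂ) else 0) := by
    ext k l
    simp only [Matrix.toBlocks₁₁, Matrix.of_apply, hMdef, Matrix.submatrix_apply, he_inl]
    rw [hA]
    exact if_congr (hkey k l) rfl rfl
  have h12 : M.toBlocks₁₂ = 0 := by
    ext k q
    simp only [Matrix.toBlocks₁₂, Matrix.of_apply, hMdef, Matrix.submatrix_apply, he_inl, he_inr,
      Matrix.zero_apply]
    rw [hA, if_neg]
    intro h
    apply q.prop
    rw [← h, ← Function.iterate_one σ]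
    exact hmem_iter _ _ (hg_mem k)
  set N := M.toBlocks₂₂ with hNdef
  have hNentry : ∀ i j : Qt, N i j = if σ i.val = j.val then 1 else 0 := by
    intro i j
    simp only [hNdef, Matrix.toBlocks₂₂, Matrix.of_apply, hMdef, Matrix.submatrix_apply, he_inr]
    rw [hA]
  have claim : ∀ (k : ℕ) (i j : Qt), (N ^ k) i j ≠ 0 → σ^[k] i.val = j.val := by
    intro k
    induction k with
    | zero =>
      intro i j h
      rw [pow_zero] at h
      have hij : i = j := by
        by_contra hne
        exact h (Matrix.one_apply_ne hne)
      subst hij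
      simp
    | succ k ih =>
      intro i j h
      rw [pow_succ, Matrix.mul_apply] at h
      obtain ⟨l, -, hl⟩ := Finset.exists_ne_zero_of_sum_ne_zero h
      have h1 := ih i l (left_ne_zero_of_mul hl)
      have h2 : σ l.val = j.val := by
        have := right_ne_zero_of_mul hl
        rw [hNentry] at this
        by_contra hne
        exact this (if_neg hne)
      rw [Function.iterate_succ_apply', h1, h2]
  have hNn : N ^ n = 0 := by
    ext i j
    rw [Matrix.zero_apply]
    by_contra h
    exact j.prop (claim n i j h ▸ hn_iter i.val)
  have hcardQ : Fintype.card Qt = n - (m' + 1) := by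
    have h1 : Fintype.card {i // i ∈ P} = m' + 1 := (Fintype.card_congr eP).symm.trans (by simp)
    have := Fintype.card_subtype_compl (fun i : Fin n => i ∈ P)
    simp only [Fintype.card_fin] at this
    rw [show Fintype.card Qt = Fintype.card {i : Fin n // ¬ i ∈ P} from rfl, this, h1]
  have hNcp : N.charpoly = X ^ (n - (m' + 1)) := by
    have hnil : IsNilpotent N := ⟨n, hNn⟩
    have h := Matrix.isNilpotent_charpoly_sub_pow_of_isNilpotent hnil
    have h0 : N.charpoly - X ^ Fintype.card Qt = 0 := h.eq_zero
    rw [hcardQ] at h0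
    exact sub_eq_zero.mp h0
  rw [hcp, ← Matrix.fromBlocks_toBlocks M, h11, h12, Matrix.charpoly_fromBlocks_zero₁₂, hNcp,
    cycle_charpoly m' (Matrix.of fun k l : Fin (m' + 1) => if l = k + 1 then (1 : ℂ) else 0) (fun k l => rfl)]
  ring
end

section
/- Let n ≥ 1 and σ : Fin n → Fin n with set of periodic points P = {i : ∃ k ≥ 1, σ^[k] i = i} forming a single cycle of length m = card P (for all p, q ∈ P there is t with σ^[t] p = q). Let L_σ : ℂ^n → ℂ^n be the linear map (L_σ x) i = x (σ i). Then for every ω ∈ ℂ with ω^m = 1, the eigenspace {x ∈ ℂ^n : L_σ x = ω • x} is one-dimensional and is spanned by a vector v every entry of which is a power of ω (in particular every entry of v is a nonzero m-th root of unity). -/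
/-- For a 1-input regular network whose periodic points form a single
cycle of length `m`, for every `m`-th root of unity `ω` the eigenspace
`{x ∈ ℂ^n : x ∘ σ = ω • x}` of the adjacency action is one-dimensional, spanned by a
nonzero vector each of whose entries is a power of `ω`. -/
theorem eigenspace_of_root_of_unity
    (n : ℕ) (hn : 1 ≤ n) (σ : Fin n → Fin n)
    (P : Set (Fin n)) (hP : P = { i | ∃ k ≥ 1, σ^[k] i = i })
    (hcycle : ∀ p ∈ P, ∀ q ∈ P, ∃ t : ℕ, σ^[t] p = q)
    (m : ℕ) (hm : m = P.ncard)
    (ω : ℂ) (hω : ω ^ m = 1) :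
    ∃ v : Fin n → ℂ, (∀ i, ∃ k : ℕ, v i = ω ^ k) ∧ v ≠ 0 ∧
      { x : Fin n → ℂ | ∀ i, x (σ i) = ω * x i } = { x : Fin n → ℂ | ∃ a : ℂ, x = a • v } := by
  classical
  -- every point is eventually periodic
  have hev : ∀ i : Fin n, ∃ k, σ^[k] i ∈ P := by
    intro i
    obtain ⟨a, b, hne, hab⟩ := Finite.exists_ne_map_eq_of_infinite (fun k : ℕ => σ^[k] i)
    wlog hlt : a < b generalizing a b
    · exact this b a hne.symm hab.symm (by omega)
    refine ⟨a, ?_⟩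
    rw [hP]
    refine ⟨b - a, by omega, ?_⟩
    rw [← Function.iterate_add_apply]
    rw [show b - a + a = b from by omega]
    exact hab.symm
  -- a base periodic point
  obtain ⟨k0, hp0⟩ := hev ⟨0, hn⟩
  set p0 := σ^[k0] ⟨0, hn⟩ with hp0def
  -- everybody reaches p0
  have hK : ∀ i : Fin n, ∃ k, σ^[k] i = p0 := by
    intro i
    obtain ⟨k1, hk1⟩ := hev i
    obtain ⟨t, ht⟩ := hcycle _ hk1 p0 hp0
    exact ⟨t + k1, by rw [Function.iterate_add_apply]; exact ht⟩
  -- p0 is a periodic point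
  have hp0per : p0 ∈ Function.periodicPts σ := by
    rw [hP] at hp0
    obtain ⟨k, hk1, hk⟩ := hp0
    exact ⟨k, by omega, hk⟩
  set r := Function.minimalPeriod σ p0 with hr
  have hrpos : 0 < r := Function.minimalPeriod_pos_of_mem_periodicPts hp0per
  -- P is exactly the orbit of p0
  have hPeq : P = ↑((Finset.range r).image (fun k => σ^[k] p0)) := by
    ext q
    simp only [Finset.coe_image, Finset.coe_range, Set.mem_image, Set.mem_Iio]
    constructor
    · intro hq
      obtain ⟨t, ht⟩ := hcycle p0 hp0 q hq
      refine ⟨t % r, Nat.mod_lt _ hrpos, ?_⟩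
      rw [Function.iterate_mod_minimalPeriod_eq]; exact ht
    · rintro ⟨k, _, rfl⟩
      rw [hP]
      exact ⟨r, hrpos, by
        rw [← Function.iterate_add_apply, Nat.add_comm, Function.iterate_add_apply,
          Function.iterate_minimalPeriod]⟩
  have hmr : m = r := by
    rw [hm, hPeq, Set.ncard_coe_finset, Finset.card_image_of_injOn, Finset.card_range]
    intro a ha b hb hab
    simp only [Finset.mem_coe, Finset.mem_range] at ha hb
    exact Function.iterate_injOn_Iio_minimalPeriod ha hb hab
  have hm1 : 1 ≤ m := by omega
  have hωne : ω ≠ 0 := by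
    intro h
    rw [h, zero_pow (by omega)] at hω
    exact zero_ne_one hω
  -- return times to p0 give equal powers of ω
  have hdvd : ∀ d, σ^[d] p0 = p0 → ω ^ d = 1 := by
    intro d hd
    have : Function.minimalPeriod σ p0 ∣ d := Function.IsPeriodicPt.minimalPeriod_dvd hd
    rw [← hr, ← hmr] at this
    obtain ⟨c, rfl⟩ := this
    rw [pow_mul, hω, one_pow]
  have huniq : ∀ (i : Fin n) a b, σ^[a] i = p0 → σ^[b] i = p0 → ω ^ a = ω ^ b := by
    have key : ∀ (i : Fin n) a b, a ≤ b → σ^[a] i = p0 → σ^[b] i = p0 → ω ^ a = ω ^ b := by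
      intro i a b hab ha hb
      have hret : σ^[b - a] p0 = p0 := by
        have h : σ^[b - a] p0 = σ^[b] i := by
          rw [← ha, ← Function.iterate_add_apply, show b - a + a = b from by omega]
        rw [h, hb]
      have := hdvd _ hret
      calc ω ^ a = ω ^ (b - a) * ω ^ a := by rw [this, one_mul]
        _ = ω ^ b := by rw [← pow_add, show b - a + a = b from by omega]
    intro i a b ha hb
    rcases le_total a b with h | h
    · exact key i a b h ha hb
    · exact (key i b a h hb ha).symm
  set K : Fin n → ℕ := fun i => (hK i).choose with hKdef
  have hKspec : ∀ i, σ^[K i] i = p0 := fun i => (hK i).choose_spec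
  set v : Fin n → ℂ := fun i => ω ^ ((m - 1) * K i) with hv
  have hvinv : ∀ (i : Fin n) a, σ^[a] i = p0 → v i * ω ^ a = 1 := by
    intro i a ha
    have h1 : ω ^ a = ω ^ (K i) := huniq i a (K i) ha (hKspec i)
    rw [hv, h1, ← pow_add, show (m - 1) * K i + K i = m * K i from by
      rw [Nat.sub_one_mul, Nat.sub_add_cancel (Nat.le_mul_of_pos_left _ (by omega))],
      pow_mul, hω, one_pow]
  have hveig : ∀ i, v (σ i) = ω * v i := by
    intro i
    have ha : σ^[K (σ i) + 1] i = p0 := by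
      rw [Function.iterate_add_apply, Function.iterate_one]
      exact hKspec (σ i)
    have h1 := hvinv (σ i) _ (hKspec (σ i))
    have h2 := hvinv i _ ha
    rw [pow_succ] at h2
    have : v (σ i) * ω ^ (K (σ i)) = (ω * v i) * ω ^ (K (σ i)) := by
      rw [h1]; linear_combination -h2
    exact mul_right_cancel₀ (pow_ne_zero _ hωne) this
  refine ⟨v, fun i => ⟨(m - 1) * K i, rfl⟩, ?_, ?_⟩
  · intro h
    have := congrFun h p0
    simp only [hv, Pi.zero_apply] at this
    exact pow_ne_zero _ hωne this
  · ext x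
    simp only [Set.mem_setOf_eq]
    constructor
    · intro hx
      have hiter : ∀ (k : ℕ) (i : Fin n), x (σ^[k] i) = ω ^ k * x i := by
        intro k
        induction k with
        | zero => intro i; simp
        | succ k ih =>
          intro i
          rw [Function.iterate_succ_apply', hx, ih, pow_succ]
          ring
      refine ⟨x p0, ?_⟩
      funext i
      have h1 : x p0 = ω ^ (K i) * x i := by rw [← hKspec i, hiter]
      have h2 := hvinv i _ (hKspec i)
      simp only [Pi.smul_apply, smul_eq_mul]
      calc x i = (v i * ω ^ (K i)) * x i := by rw [h2, one_mul]
        _ = x p0 * v i := by rw [h1]; ring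
    · rintro ⟨a, rfl⟩ i
      simp only [Pi.smul_apply, smul_eq_mul, hveig i]
      ring
end

section
/- Let n ≥ 1, let σ : Fin n → Fin n with set of periodic points P = {i : ∃ k ≥ 1, σ^[k] i = i}, and let L_σ : ℝ^n → ℝ^n be the linear map (L_σ x) i = x (σ i). Then the kernel of L_σ^n (the n-th iterate, i.e. the generalized eigenspace of the eigenvalue 0) equals {x ∈ ℝ^n : ∀ i ∈ P, x i = 0}, a subspace of dimension n − card P; moreover ker (L_σ^k) = ker (L_σ^n) for every k ≥ n. In particular, the algebraic multiplicity of the eigenvalue 0 of the adjacency matrix is n − m where m = card P. -/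
open Function

lemma funLeft_pow (n k : ℕ) (σ : Fin n → Fin n) :
    (LinearMap.funLeft ℝ ℝ σ) ^ k = LinearMap.funLeft ℝ ℝ (σ^[k]) := by
  induction k with
  | zero => ext x i; simp [LinearMap.funLeft_apply]
  | succ k ih =>
    rw [pow_succ, ih, Function.iterate_succ', LinearMap.funLeft_comp, Module.End.mul_eq_comp]

lemma range_iterate_eq (n : ℕ) (σ : Fin n → Fin n) (k : ℕ) (hk : n ≤ k) :
    Set.range (σ^[k]) = { i | ∃ m ≥ 1, σ^[m] i = i } := by
  ext j
  constructor
  · rintro ⟨i, rfl⟩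
    obtain ⟨a, b, hab, hfab⟩ :
        ∃ a b : Fin (n + 1), a ≠ b ∧ σ^[(a : ℕ)] i = σ^[(b : ℕ)] i := by
      apply Fintype.exists_ne_map_eq_of_card_lt (fun a : Fin (n+1) => σ^[(a : ℕ)] i)
      simp
    wlog hlt : (a : ℕ) < (b : ℕ) generalizing a b
    · exact this b a hab.symm hfab.symm
        (by have := Fin.val_ne_of_ne hab; omega)
    refine ⟨(b : ℕ) - (a : ℕ), by omega, ?_⟩
    have hb : (b : ℕ) ≤ k := by omega
    have h1 : ((b : ℕ) - (a : ℕ)) + k = (k - (a : ℕ)) + (b : ℕ) := by omega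
    calc σ^[(b : ℕ) - (a : ℕ)] (σ^[k] i) = σ^[((b : ℕ) - (a : ℕ)) + k] i :=
          (Function.iterate_add_apply σ _ k i).symm
      _ = σ^[(k - (a : ℕ)) + (b : ℕ)] i := by rw [h1]
      _ = σ^[k - (a : ℕ)] (σ^[(b : ℕ)] i) := Function.iterate_add_apply σ _ _ i
      _ = σ^[k - (a : ℕ)] (σ^[(a : ℕ)] i) := by rw [hfab]
      _ = σ^[(k - (a : ℕ)) + (a : ℕ)] i := (Function.iterate_add_apply σ _ _ i).symm
      _ = σ^[k] i := by congr 1; omega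
  · rintro ⟨m, hm, hfix⟩
    have hmk : σ^[m * k] j = j := by
      rw [Function.iterate_mul]
      exact Function.iterate_fixed hfix k
    refine ⟨σ^[m * k - k] j, ?_⟩
    have : k + (m * k - k) = m * k := by have h2 : k ≤ m * k := Nat.le_mul_of_pos_left k (by omega); omega
    rw [← Function.iterate_add_apply, this, hmk]

/-- For the adjacency action `L_σ x = x ∘ σ`, the kernel of `L_σ^n` (the
generalized eigenspace of `0`) is `{x : ∀ i ∈ P, x i = 0}` where `P` is the set of
periodic points of `σ`; it has dimension `n - card P`, and `ker (L_σ^k) = ker (L_σ^n)`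
for all `k ≥ n`. -/
theorem generalized_kernel_of_adjacency_action
    (n : ℕ) (hn : 1 ≤ n) (σ : Fin n → Fin n)
    (P : Set (Fin n)) (hP : P = { i | ∃ k ≥ 1, σ^[k] i = i }) :
    (∀ x : Fin n → ℝ, x ∈ LinearMap.ker ((LinearMap.funLeft ℝ ℝ σ) ^ n) ↔
      ∀ i ∈ P, x i = 0) ∧
    Module.finrank ℝ (LinearMap.ker ((LinearMap.funLeft ℝ ℝ σ) ^ n)) = n - P.ncard ∧
    (∀ k ≥ n, LinearMap.ker ((LinearMap.funLeft ℝ ℝ σ) ^ k) =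
      LinearMap.ker ((LinearMap.funLeft ℝ ℝ σ) ^ n)) := by
  have hPr : ∀ k, n ≤ k → Set.range (σ^[k]) = P := by
    intro k hk; rw [hP]; exact range_iterate_eq n σ k hk
  have key : ∀ k, n ≤ k → ∀ x : Fin n → ℝ,
      x ∈ LinearMap.ker ((LinearMap.funLeft ℝ ℝ σ) ^ k) ↔ ∀ i ∈ P, x i = 0 := by
    intro k hk x
    rw [funLeft_pow, LinearMap.mem_ker]
    constructor
    · intro h i hi
      obtain ⟨j, rfl⟩ : i ∈ Set.range (σ^[k]) := by rw [hPr k hk]; exact hi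
      simpa [LinearMap.funLeft_apply] using congrFun h j
    · intro h
      funext j
      have hm : σ^[k] j ∈ P := by rw [← hPr k hk]; exact ⟨j, rfl⟩
      simpa [LinearMap.funLeft_apply] using h _ hm
  refine ⟨key n le_rfl, ?_, fun k hk => by ext x; rw [key k hk, key n le_rfl]⟩
  haveI : Fintype P := Set.Finite.fintype (Set.toFinite P)
  set π := LinearMap.funLeft ℝ ℝ (Subtype.val : P → Fin n) with hπ
  have hker : LinearMap.ker ((LinearMap.funLeft ℝ ℝ σ) ^ n) = LinearMap.ker π := by
    ext x
    rw [key n le_rfl, LinearMap.mem_ker]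
    simp [hπ, funext_iff, LinearMap.funLeft_apply, Subtype.forall]
  have hsurj : Function.Surjective π :=
    LinearMap.funLeft_surjective_of_injective ℝ ℝ _ Subtype.val_injective
  have hrn := LinearMap.finrank_range_add_finrank_ker π
  rw [LinearMap.range_eq_top.mpr hsurj, finrank_top] at hrn
  have h1 : Module.finrank ℝ (Fin n → ℝ) = n := by simp
  have h2 : Module.finrank ℝ (P → ℝ) = Fintype.card P := by simp
  have h3 : P.ncard = Fintype.card P := by
    rw [Set.ncard_eq_toFinset_card', Set.toFinset_card]
  rw [h1, h2] at hrn
  rw [hker, h3]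
  omega
end

section
/- Let n ≥ 1, let σ : Fin n → Fin n with set of periodic points P = {i : ∃ k ≥ 1, σ^[k] i = i}, and let L_σ : ℝ^n → ℝ^n be the linear map (L_σ x) i = x (σ i). Then ker L_σ = ker (L_σ ∘ L_σ) if and only if every element of the range of σ is periodic, i.e. σ i ∈ P for all i. In particular, if some cell i has σ i not periodic (the network has depth greater than 1), then ker L_σ is strictly contained in ker L_σ², so the adjacency matrix is not semisimple. -/
/-- For the adjacency action `L_σ x = x ∘ σ`, `ker L_σ = ker (L_σ ∘ L_σ)`
iff every element of the range of `σ` is a periodic point; in particular if some `σ i`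
is not periodic (depth > 1), then `ker L_σ` is strictly contained in `ker L_σ²`, so the
adjacency matrix is not semisimple. -/
theorem kernel_stabilizes_iff_range_periodic
    (n : ℕ) (hn : 1 ≤ n) (σ : Fin n → Fin n)
    (P : Set (Fin n)) (hP : P = { i | ∃ k ≥ 1, σ^[k] i = i }) :
    (LinearMap.ker (LinearMap.funLeft ℝ ℝ σ) =
        LinearMap.ker ((LinearMap.funLeft ℝ ℝ σ).comp (LinearMap.funLeft ℝ ℝ σ)) ↔
      ∀ i, σ i ∈ P) ∧
    ((∃ i, σ i ∉ P) →
      LinearMap.ker (LinearMap.funLeft ℝ ℝ σ) <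
        LinearMap.ker ((LinearMap.funLeft ℝ ℝ σ).comp (LinearMap.funLeft ℝ ℝ σ))) := by
  subst hP
  -- membership characterizations of the kernels
  have hker : ∀ x : Fin n → ℝ,
      x ∈ LinearMap.ker (LinearMap.funLeft ℝ ℝ σ) ↔ ∀ i, x (σ i) = 0 := by
    intro x
    simp [LinearMap.mem_ker, funext_iff]
  have hker2 : ∀ x : Fin n → ℝ,
      x ∈ LinearMap.ker ((LinearMap.funLeft ℝ ℝ σ).comp (LinearMap.funLeft ℝ ℝ σ)) ↔
        ∀ i, x (σ (σ i)) = 0 := by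
    intro x
    simp [LinearMap.mem_ker, funext_iff]
  -- the easy inclusion
  have hle : LinearMap.ker (LinearMap.funLeft ℝ ℝ σ) ≤
      LinearMap.ker ((LinearMap.funLeft ℝ ℝ σ).comp (LinearMap.funLeft ℝ ℝ σ)) := by
    intro x hx
    rw [hker] at hx
    rw [hker2]
    intro i
    exact hx (σ i)
  -- claim1: periodicity of every σ i implies range σ ⊆ range (σ ∘ σ)
  have claim1 : (∀ i, σ i ∈ {i | ∃ k ≥ 1, σ^[k] i = i}) → ∀ i, ∃ j, σ (σ j) = σ i := by
    intro h i
    obtain ⟨k, hk1, hk⟩ := h i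
    obtain ⟨m, rfl⟩ : ∃ m, k = m + 1 := ⟨k - 1, by omega⟩
    refine ⟨σ^[m] i, ?_⟩
    have h1 : σ (σ^[m] i) = σ^[m + 1] i := (Function.iterate_succ_apply' σ m i).symm
    have h2 : σ (σ^[m + 1] i) = σ^[m + 1] (σ i) := by
      rw [← Function.iterate_succ_apply' σ (m + 1) i, Function.iterate_succ_apply σ (m + 1) i]
    rw [h1, h2, hk]
  -- claim2: range σ ⊆ range (σ ∘ σ) implies every σ i is periodic
  have claim2 : (∀ i, ∃ j, σ (σ j) = σ i) → ∀ i, σ i ∈ {i | ∃ k ≥ 1, σ^[k] i = i} := by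
    intro h i
    set S : Set (Fin n) := Set.range σ with hS
    have hmaps : Set.MapsTo σ S S := fun a _ => ⟨a, rfl⟩
    have hsurj : Set.SurjOn σ S S := by
      rintro y ⟨i, rfl⟩
      obtain ⟨j, hj⟩ := h i
      exact ⟨σ j, ⟨j, rfl⟩, hj⟩
    have hfin : S.Finite := Set.toFinite S
    have hinj : Set.InjOn σ S :=
      (((hfin.surjOn_iff_bijOn_of_mapsTo hmaps).mp hsurj)).injOn
    have hiter : ∀ m, σ^[m] (σ i) ∈ S := by
      intro m
      induction m with
      | zero => exact ⟨i, rfl⟩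
      | succ m ih => rw [Function.iterate_succ_apply']; exact hmaps ih
    have cancel : ∀ a d, σ^[a] (σ i) = σ^[a + d] (σ i) → σ^[d] (σ i) = σ i := by
      intro a
      induction a with
      | zero => intro d hd; simpa using hd.symm
      | succ a ih =>
        intro d hd
        apply ih
        have h1 : σ (σ^[a] (σ i)) = σ (σ^[a + d] (σ i)) := by
          rw [← Function.iterate_succ_apply' σ a (σ i),
            ← Function.iterate_succ_apply' σ (a + d) (σ i)]
          have : a + 1 + d = a + d + 1 := by omega
          rw [this] at hd
          exact hd
        exact hinj (hiter a) (hiter (a + d)) h1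
    obtain ⟨a, b, hab, heq⟩ : ∃ a b : ℕ, a < b ∧ σ^[a] (σ i) = σ^[b] (σ i) := by
      obtain ⟨a, b, hne, heq⟩ :=
        Finite.exists_ne_map_eq_of_infinite (fun k : ℕ => σ^[k] (σ i))
      rcases hne.lt_or_gt with hlt | hlt
      · exact ⟨a, b, hlt, heq⟩
      · exact ⟨b, a, hlt, heq.symm⟩
    refine ⟨b - a, by omega, cancel a (b - a) ?_⟩
    rw [Nat.add_sub_cancel' hab.le]
    exact heq
  -- if some σ i is not periodic, produce a witness separating the kernels
  have hwitness : (∃ i, σ i ∉ {i | ∃ k ≥ 1, σ^[k] i = i}) →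
      ∃ x : Fin n → ℝ,
        x ∈ LinearMap.ker ((LinearMap.funLeft ℝ ℝ σ).comp (LinearMap.funLeft ℝ ℝ σ)) ∧
        x ∉ LinearMap.ker (LinearMap.funLeft ℝ ℝ σ) := by
    intro hnp
    have hB : ¬ ∀ i, ∃ j, σ (σ j) = σ i := by
      intro hB
      obtain ⟨i, hi⟩ := hnp
      exact hi (claim2 hB i)
    push_neg at hB
    obtain ⟨i₀, hi₀⟩ := hB
    refine ⟨Pi.single (σ i₀) (1 : ℝ), ?_, ?_⟩
    · rw [hker2]
      intro i
      exact Pi.single_eq_of_ne (fun hc => hi₀ i hc) 1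
    · rw [hker]
      intro hx
      have := hx i₀
      rw [Pi.single_eq_same] at this
      exact one_ne_zero this
  constructor
  · constructor
    · intro heq
      by_contra hc
      push_neg at hc
      obtain ⟨x, hx2, hx1⟩ := hwitness hc
      rw [← heq] at hx2
      exact hx1 hx2
    · intro hall
      refine le_antisymm hle ?_
      intro x hx
      rw [hker2] at hx
      rw [hker]
      intro i
      obtain ⟨j, hj⟩ := claim1 hall i
      rw [← hj]
      exact hx j
  · intro hnp
    obtain ⟨x, hx2, hx1⟩ := hwitness hnp
    exact lt_of_le_of_ne hle (fun heq => hx1 (heq ▸ hx2))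
end

section
/- Let n ≥ 1, let σ : Fin n → Fin n, and let L be a nonempty subset of the leaf set {j : j ∉ Set.range σ} with nonempty complement. Then the equivalence relation r on Fin n defined by r i j ↔ (i ∈ L ↔ j ∈ L) (whose two classes are L and its complement) is balanced for σ, and its polydiagonal Δ_r = {x ∈ ℝ^n : ∀ i j, r i j → x i = x j} equals the two-dimensional subspace spanned by the all-ones vector and the indicator vector of L; hence Δ_r is a two-dimensional synchrony subspace of the network. -/
/-- For a nonempty subset `L` of leaf cells (cells outside the range of
`σ`) with nonempty complement, the two-class equivalence relation
`r i j ↔ (i ∈ L ↔ j ∈ L)` is balanced for `σ`, and its polydiagonal equals the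
two-dimensional subspace spanned by the all-ones vector and the indicator vector of
`L`. -/
theorem leaf_subset_gives_two_dim_synchrony
    (n : ℕ) (hn : 1 ≤ n) (σ : Fin n → Fin n)
    (L : Set (Fin n)) (hleaf : ∀ j ∈ L, j ∉ Set.range σ)
    (hL : L.Nonempty) (hLc : Lᶜ.Nonempty) :
    (∀ i j : Fin n, (i ∈ L ↔ j ∈ L) → ((σ i ∈ L) ↔ (σ j ∈ L))) ∧
    ({ x : Fin n → ℝ | ∀ i j, (i ∈ L ↔ j ∈ L) → x i = x j } =
      ↑(Submodule.span ℝ ({fun _ => (1 : ℝ), L.indicator (fun _ => (1 : ℝ))} :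
          Set (Fin n → ℝ)))) ∧
    Module.finrank ℝ
      (Submodule.span ℝ ({fun _ => (1 : ℝ), L.indicator (fun _ => (1 : ℝ))} :
        Set (Fin n → ℝ))) = 2 := by
  obtain ⟨i0, hi0⟩ := hL
  obtain ⟨j0, hj0⟩ := hLc
  have hj0 : j0 ∉ L := hj0
  have hnot : ∀ i : Fin n, σ i ∉ L := fun i h => hleaf _ h ⟨i, rfl⟩
  set u : Fin n → ℝ := fun _ => (1 : ℝ) with hu
  set v : Fin n → ℝ := L.indicator (fun _ => (1 : ℝ)) with hv
  have hvmem : ∀ i ∈ L, v i = 1 := fun i h => Set.indicator_of_mem h _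
  have hvnot : ∀ i, i ∉ L → v i = 0 := fun i h => Set.indicator_of_notMem h _
  refine ⟨fun i j _ => by simp [hnot i, hnot j], ?_, ?_⟩
  · ext x
    simp only [Set.mem_setOf_eq, SetLike.mem_coe]
    constructor
    · intro hx
      have : x = x j0 • u + (x i0 - x j0) • v := by
        funext i
        by_cases hi : i ∈ L
        · have := hx i i0 (by simp [hi, hi0])
          simp [this, hu, hvmem i hi]
        · have := hx i j0 (by simp [hi, hj0])
          simp [this, hu, hvnot i hi]
      rw [this]
      exact Submodule.add_mem _
        (Submodule.smul_mem _ _ (Submodule.subset_span (by simp)))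
        (Submodule.smul_mem _ _ (Submodule.subset_span (by simp)))
    · intro hx
      induction hx using Submodule.span_induction with
      | mem y hy =>
          rcases hy with hy | hy
          · subst hy; intro i j _; rfl
          · subst hy; intro i j hij
            by_cases hi : i ∈ L
            · rw [hvmem i hi, hvmem j (hij.mp hi)]
            · rw [hvnot i hi, hvnot j (fun h => hi (hij.mpr h))]
      | zero => intro i j _; rfl
      | add y z _ _ hy hz => intro i j hij; simp [hy i j hij, hz i j hij]
      | smul a y _ hy => intro i j hij; simp [hy i j hij]
  · have hli : LinearIndependent ℝ ![u, v] := by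
      rw [LinearIndependent.pair_iff]
      intro s t hst
      have h1 : s * u i0 + t * v i0 = 0 := congrFun hst i0
      have h2 : s * u j0 + t * v j0 = 0 := congrFun hst j0
      rw [hvmem i0 hi0] at h1
      rw [hvnot j0 hj0] at h2
      simp only [hu] at h1 h2
      constructor <;> nlinarith
    have := finrank_span_eq_card hli
    rw [show Set.range ![u, v] = {u, v} by
      simp [Matrix.range_cons, Matrix.range_empty, Set.insert_def, or_comm]] at this
    simpa using this
end

section
/- Let m ≥ 1 and let σ : ZMod m → ZMod m be the cyclic shift σ i = i + 1 (the input map of the m-cell ring network). An equivalence relation r on ZMod m is balanced for σ (i.e. r i j implies r (σ i) (σ j) for all i, j) if and only if there exists an additive subgroup H of ZMod m such that r i j ↔ i − j ∈ H for all i, j. Consequently, the balanced colourings of the ring are exactly the colourings by cosets of a subgroup: the cells are coloured with a repeating sequence of m/|H| colours repeated |H| times around the ring. -/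
/-- For the `m`-cell ring network with input map `σ i = i + 1` on
`ZMod m`, an equivalence relation `r` is balanced iff it is given by the cosets of an
additive subgroup `H` of `ZMod m`: `r i j ↔ i - j ∈ H`. -/
theorem ring_balanced_iff_subgroup
    (m : ℕ) (hm : 1 ≤ m)
    (r : ZMod m → ZMod m → Prop) (hr : Equivalence r) :
    (∀ i j : ZMod m, r i j → r (i + 1) (j + 1)) ↔
    (∃ H : AddSubgroup (ZMod m), ∀ i j : ZMod m, r i j ↔ i - j ∈ H) := by
  constructor
  · intro hb
    have hnat : ∀ (n : ℕ) (i j : ZMod m), r i j → r (i + n) (j + n) := by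
      intro n
      induction n with
      | zero => exact fun i j h => by simpa using h
      | succ k ih =>
          intro i j h
          have := hb _ _ (ih i j h)
          push_cast
          simpa [add_assoc] using this
    have hshift : ∀ (c i j : ZMod m), r i j → r (i + c) (j + c) := by
      intro c i j h
      have : NeZero m := ⟨by omega⟩
      have hc : ((c.val : ℕ) : ZMod m) = c := by simp [ZMod.natCast_val, ZMod.cast_id]
      simpa [hc] using hnat c.val i j h
    refine ⟨{ carrier := {d | r d 0}
              zero_mem' := hr.refl 0
              add_mem' := by
                intro a b ha hb'
                have h1 : r (a + b) (0 + b) := hshift b a 0 ha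
                simpa using hr.trans (by simpa using h1) hb'
              neg_mem' := by
                intro a ha
                have := hshift (-a) a 0 ha
                simpa using hr.symm (by simpa using this) }, ?_⟩
    intro i j
    constructor
    · intro h
      have := hshift (-j) i j h
      simpa [sub_eq_add_neg] using this
    · intro h
      have := hshift j (i - j) 0 h
      simpa using this
  · rintro ⟨H, hH⟩ i j h
    rw [hH] at h ⊢
    simpa using h
end

section
/- Let σ₁ : Fin n₁ → Fin n₁ and σ₂ : Fin n₂ → Fin n₂ be input maps whose sets of periodic points P₁ and P₂ each form a single cycle of the same length m (for each a ∈ {1,2} and all p, q ∈ P_a there is t with σ_a^[t] p = q, and card P₁ = card P₂ = m). Then there exists a bijection φ : P₁ → P₂ with φ (σ₁ p) = σ₂ (φ p) for all p ∈ P₁, and for any such φ the equivalence relation r on (Fin n₁) ⊕ (Fin n₂) whose only nontrivial relations are r (inl p) (inr (φ p)) for p ∈ P₁ is balanced for the disjoint-union input map σ (defined by σ (inl i) = inl (σ₁ i) and σ (inr i) = inr (σ₂ i)); hence it defines a pairing bipartite synchrony subspace of the disjoint union network. -/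
open Function

private lemma ring_lemma {N : ℕ} (σ : Fin N → Fin N) (P : Set (Fin N))
    (hP : P = { i | ∃ k ≥ 1, σ^[k] i = i })
    (hcycle : ∀ p ∈ P, ∀ q ∈ P, ∃ t : ℕ, σ^[t] p = q)
    (p₀ : Fin N) (hp₀ : p₀ ∈ P) :
    ∀ s t : ℕ, σ^[s] p₀ = σ^[t] p₀ ↔ s % P.ncard = t % P.ncard := by
  obtain ⟨k, hk, hkp⟩ : ∃ k ≥ 1, σ^[k] p₀ = p₀ := by rwa [hP] at hp₀
  have hper : p₀ ∈ periodicPts σ := mk_mem_periodicPts hk hkp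
  have hMpos : 0 < minimalPeriod σ p₀ := minimalPeriod_pos_of_mem_periodicPts hper
  have hMP : IsPeriodicPt σ (minimalPeriod σ p₀) p₀ := isPeriodicPt_minimalPeriod σ p₀
  have himg : P = (fun t => σ^[t] p₀) '' Set.Iio (minimalPeriod σ p₀) := by
    apply Set.Subset.antisymm
    · intro p hp
      obtain ⟨t, ht⟩ := hcycle p₀ hp₀ p hp
      refine ⟨t % minimalPeriod σ p₀, Nat.mod_lt _ hMpos, ?_⟩
      show σ^[t % minimalPeriod σ p₀] p₀ = p
      rw [iterate_mod_minimalPeriod_eq]; exact ht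
    · rintro _ ⟨t, _, rfl⟩
      rw [hP]
      exact ⟨minimalPeriod σ p₀, hMpos, hMP.apply_iterate t⟩
  have hcard : P.ncard = minimalPeriod σ p₀ := by
    rw [himg, Set.ncard_image_of_injOn iterate_injOn_Iio_minimalPeriod,
      ← Finset.coe_Iio, Set.ncard_coe_finset, Nat.card_Iio]
  intro s t
  rw [hcard]
  constructor
  · intro h
    refine iterate_injOn_Iio_minimalPeriod (Nat.mod_lt _ hMpos) (Nat.mod_lt _ hMpos) ?_
    simpa only [iterate_mod_minimalPeriod_eq] using h
  · intro h
    rw [← iterate_mod_minimalPeriod_eq, ← iterate_mod_minimalPeriod_eq (n := t), h]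

private lemma exists_periodic {N : ℕ} (σ : Fin N → Fin N) (hN : 0 < N) :
    ∃ i : Fin N, ∃ k ≥ 1, σ^[k] i = i := by
  obtain ⟨a, b, hne, hab⟩ := Finite.exists_ne_map_eq_of_infinite (fun t : ℕ => σ^[t] (⟨0, hN⟩ : Fin N))
  rcases hne.lt_or_gt with h | h
  · exact ⟨σ^[a] ⟨0, hN⟩, b - a, Nat.le_sub_of_add_le (by omega), by
      rw [← iterate_add_apply, Nat.sub_add_cancel h.le, ← hab]⟩
  · exact ⟨σ^[b] ⟨0, hN⟩, a - b, Nat.le_sub_of_add_le (by omega), by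
      rw [← iterate_add_apply, Nat.sub_add_cancel h.le, hab]⟩

/-- If the periodic points `P₁`, `P₂` of input maps `σ₁`, `σ₂` each form
a single cycle of the same length `m`, then there is a bijection `φ : P₁ → P₂`
conjugating `σ₁` to `σ₂`, and for any such `φ` the equivalence relation on
`Fin n₁ ⊕ Fin n₂` whose only nontrivial relations pair `inl p` with `inr (φ p)` for
`p ∈ P₁` is balanced for the disjoint-union input map `Sum.map σ₁ σ₂`; hence it defines
a pairing bipartite synchrony subspace of the disjoint union network. -/
theorem pairing_bipartite_of_equal_rings
    (n₁ n₂ m : ℕ) (σ₁ : Fin n₁ → Fin n₁) (σ₂ : Fin n₂ → Fin n₂)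
    (P₁ : Set (Fin n₁)) (hP₁ : P₁ = { i | ∃ k ≥ 1, σ₁^[k] i = i })
    (P₂ : Set (Fin n₂)) (hP₂ : P₂ = { i | ∃ k ≥ 1, σ₂^[k] i = i })
    (hcycle₁ : ∀ p ∈ P₁, ∀ q ∈ P₁, ∃ t : ℕ, σ₁^[t] p = q)
    (hcycle₂ : ∀ p ∈ P₂, ∀ q ∈ P₂, ∃ t : ℕ, σ₂^[t] p = q)
    (hm₁ : P₁.ncard = m) (hm₂ : P₂.ncard = m) :
    (∃ φ : Fin n₁ → Fin n₂, Set.BijOn φ P₁ P₂ ∧ ∀ p ∈ P₁, φ (σ₁ p) = σ₂ (φ p)) ∧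
    (∀ φ : Fin n₁ → Fin n₂, Set.BijOn φ P₁ P₂ → (∀ p ∈ P₁, φ (σ₁ p) = σ₂ (φ p)) →
      (Equivalence (fun s t : Fin n₁ ⊕ Fin n₂ => s = t ∨
        (∃ p ∈ P₁, s = Sum.inl p ∧ t = Sum.inr (φ p)) ∨
        (∃ p ∈ P₁, s = Sum.inr (φ p) ∧ t = Sum.inl p)) ∧
      (∀ s t : Fin n₁ ⊕ Fin n₂,
        (s = t ∨ (∃ p ∈ P₁, s = Sum.inl p ∧ t = Sum.inr (φ p)) ∨
          (∃ p ∈ P₁, s = Sum.inr (φ p) ∧ t = Sum.inl p)) →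
        (Sum.map σ₁ σ₂ s = Sum.map σ₁ σ₂ t ∨
          (∃ p ∈ P₁, Sum.map σ₁ σ₂ s = Sum.inl p ∧ Sum.map σ₁ σ₂ t = Sum.inr (φ p)) ∨
          (∃ p ∈ P₁, Sum.map σ₁ σ₂ s = Sum.inr (φ p) ∧ Sum.map σ₁ σ₂ t = Sum.inl p))))) := by
  constructor
  · -- existence of a conjugating bijection
    by_cases hm : m = 0
    · -- degenerate case: both rings empty, hence n₁ = n₂ = 0
      subst hm
      have hP₁e : P₁ = ∅ := Set.ncard_eq_zero (Set.toFinite _) |>.mp hm₁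
      have hP₂e : P₂ = ∅ := Set.ncard_eq_zero (Set.toFinite _) |>.mp hm₂
      have hn₁ : n₁ = 0 := by
        by_contra h
        obtain ⟨i, hi⟩ := exists_periodic σ₁ (Nat.pos_of_ne_zero h)
        have : i ∈ P₁ := by rw [hP₁]; exact hi
        simp [hP₁e] at this
      subst hn₁
      refine ⟨fun i => i.elim0, ?_, ?_⟩
      · rw [hP₁e, hP₂e]; exact Set.bijOn_empty _
      · intro p hp; exact p.elim0
    · have hp₀ : P₁.Nonempty := Set.nonempty_of_ncard_ne_zero (by rw [hm₁]; exact hm)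
      have hq₀ : P₂.Nonempty := Set.nonempty_of_ncard_ne_zero (by rw [hm₂]; exact hm)
      obtain ⟨p₀, hp₀⟩ := hp₀
      obtain ⟨q₀, hq₀⟩ := hq₀
      have iff₁ := ring_lemma σ₁ P₁ hP₁ hcycle₁ p₀ hp₀
      have iff₂ := ring_lemma σ₂ P₂ hP₂ hcycle₂ q₀ hq₀
      have star : ∀ s t : ℕ, σ₁^[s] p₀ = σ₁^[t] p₀ ↔ σ₂^[s] q₀ = σ₂^[t] q₀ := by
        intro s t; rw [iff₁ s t, iff₂ s t, hm₁, hm₂]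
      -- closure of the rings under the maps
      obtain ⟨k₁, hk₁, hkp₁⟩ : ∃ k ≥ 1, σ₁^[k] p₀ = p₀ := by rwa [hP₁] at hp₀
      obtain ⟨k₂, hk₂, hkq₂⟩ : ∃ k ≥ 1, σ₂^[k] q₀ = q₀ := by rwa [hP₂] at hq₀
      have hmem₁ : ∀ t : ℕ, σ₁^[t] p₀ ∈ P₁ := by
        intro t; rw [hP₁]
        exact ⟨k₁, hk₁, by rw [← iterate_add_apply, Nat.add_comm, iterate_add_apply, hkp₁]⟩
      have hmem₂ : ∀ t : ℕ, σ₂^[t] q₀ ∈ P₂ := by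
        intro t; rw [hP₂]
        exact ⟨k₂, hk₂, by rw [← iterate_add_apply, Nat.add_comm, iterate_add_apply, hkq₂]⟩
      classical
      set φ : Fin n₁ → Fin n₂ :=
        fun i => if h : i ∈ P₁ then σ₂^[(hcycle₁ p₀ hp₀ i h).choose] q₀ else q₀ with hφdef
      have hφ : ∀ i, ∀ _ : i ∈ P₁, ∀ t : ℕ, σ₁^[t] p₀ = i → φ i = σ₂^[t] q₀ := by
        intro i hi t ht
        have hc := (hcycle₁ p₀ hp₀ i hi).choose_spec
        have : σ₁^[(hcycle₁ p₀ hp₀ i hi).choose] p₀ = σ₁^[t] p₀ := by rw [hc, ht]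
        rw [hφdef]; simp only [dif_pos hi]
        exact (star _ _).mp this
      refine ⟨φ, ⟨?_, ?_, ?_⟩, ?_⟩
      · -- MapsTo
        intro i hi
        obtain ⟨t, ht⟩ := hcycle₁ p₀ hp₀ i hi
        rw [hφ i hi t ht]; exact hmem₂ t
      · -- InjOn
        intro i hi j hj hij
        obtain ⟨s, hs⟩ := hcycle₁ p₀ hp₀ i hi
        obtain ⟨t, ht⟩ := hcycle₁ p₀ hp₀ j hj
        rw [hφ i hi s hs, hφ j hj t ht] at hij
        rw [← hs, ← ht]; exact (star s t).mpr hij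
      · -- SurjOn
        intro q hq
        obtain ⟨t, ht⟩ := hcycle₂ q₀ hq₀ q hq
        exact ⟨σ₁^[t] p₀, hmem₁ t, by rw [hφ _ (hmem₁ t) t rfl]; exact ht⟩
      · -- conjugation
        intro p hp
        obtain ⟨t, ht⟩ := hcycle₁ p₀ hp₀ p hp
        have h1 : σ₁^[t + 1] p₀ = σ₁ p := by rw [iterate_succ_apply', ht]
        have h2 : σ₁ p ∈ P₁ := h1 ▸ hmem₁ (t + 1)
        rw [hφ (σ₁ p) h2 (t + 1) h1, hφ p hp t ht, iterate_succ_apply']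
  · -- balancedness for any such φ
    intro φ hbij hconj
    constructor
    · refine ⟨fun s => Or.inl rfl, ?_, ?_⟩
      · rintro s t (rfl | ⟨p, hp, rfl, rfl⟩ | ⟨p, hp, rfl, rfl⟩)
        · exact Or.inl rfl
        · exact Or.inr (Or.inr ⟨p, hp, rfl, rfl⟩)
        · exact Or.inr (Or.inl ⟨p, hp, rfl, rfl⟩)
      · rintro s t u (rfl | ⟨p, hp, rfl, rfl⟩ | ⟨p, hp, rfl, rfl⟩) h2
        · exact h2
        · rcases h2 with rfl | ⟨q, hq, heq, rfl⟩ | ⟨q, hq, heq, rfl⟩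
          · exact Or.inr (Or.inl ⟨p, hp, rfl, rfl⟩)
          · exact absurd heq (by simp)
          · have : p = q := hbij.injOn hp hq (Sum.inr.inj heq)
            exact Or.inl (by rw [this])
        · rcases h2 with rfl | ⟨q, hq, heq, rfl⟩ | ⟨q, hq, heq, rfl⟩
          · exact Or.inr (Or.inr ⟨p, hp, rfl, rfl⟩)
          · have : p = q := Sum.inl.inj heq
            exact Or.inl (by rw [this])
          · exact absurd heq (by simp)
    · rintro s t (rfl | ⟨p, hp, rfl, rfl⟩ | ⟨p, hp, rfl, rfl⟩)
      · exact Or.inl rfl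
      · refine Or.inr (Or.inl ⟨σ₁ p, ?_, rfl, ?_⟩)
        · rw [hP₁] at hp ⊢
          obtain ⟨k, hk, hkp⟩ := hp
          exact ⟨k, hk, by rw [← iterate_succ_apply, iterate_succ_apply', hkp]⟩
        · show Sum.inr (σ₂ (φ p)) = Sum.inr (φ (σ₁ p))
          rw [hconj p hp]
      · refine Or.inr (Or.inr ⟨σ₁ p, ?_, ?_, rfl⟩)
        · rw [hP₁] at hp ⊢
          obtain ⟨k, hk, hkp⟩ := hp
          exact ⟨k, hk, by rw [← iterate_succ_apply, iterate_succ_apply', hkp]⟩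
        · show Sum.inr (σ₂ (φ p)) = Sum.inr (φ (σ₁ p))
          rw [hconj p hp]
end
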